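/- Let S be a densely defined, closed, symmetric operator in H with S ≥ εI for some ε > 0, and let S_F, S_K denote its Friedrichs and Krein–von Neumann extensions. If μ_{F,j} and μ_{K,j} denote the j-th min-max values (counting multiplicity) of S_F and of the reduced Krein operator Ŝ_K = S_K|_{[ker S_K]^⊥}, respectively, then ε ≤ μ_{F,j} ≤ μ_{K,j} for all j ∈ ℕ. In particular, if S_F has purely discrete spectrum, then S_K has purely discrete spectrum in (0, ∞). -/

import Mathlib

/-!
Let `K = ker S*`. Since `dom S_K = dom S ∔ K` and `S_K` vanishes on `K`, the orthogonal projection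
`P` onto `Kᗮ` maps `dom S` bijectively onto `dom Ŝ_K = dom S_K ∩ Kᗮ`, with
`⟪Pu, S_K Pu⟫ = ⟪u, S u⟫` and `‖Pu‖ ≤ ‖u‖`. So a `j`-dimensional subspace of `dom Ŝ_K` on which
`Re ⟪x, S_K x⟫ ≤ c ‖x‖²` pulls back under `P` to a `j`-dimensional subspace of `dom S ⊆ dom S_F`
on which `Re ⟪x, S_F x⟫ ≤ c ‖x‖²` (as `S ≥ 0`), whence `μ_{F,j} ≤ μ_{K,j}`; and `ε ≤ μ_{F,j}`
because `S_F ≥ ε`.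
-/

open scoped ComplexInnerProductSpace
open Filter

noncomputable section

variable {H : Type*} [NormedAddCommGroup H] [InnerProductSpace ℂ H] [CompleteSpace H]

/-- The kernel of the adjoint `S*` of a densely defined operator `S`,
described as `{v | ∀ u ∈ dom S, ⟪S u, v⟫ = 0}`. -/
def adjKerD (S : H →ₗ.[ℂ] H) : Submodule ℂ H where
  carrier := {v | ∀ u : S.domain, ⟪S u, v⟫ = 0}
  add_mem' := by
    intro a b ha hb u
    rw [inner_add_right, ha u, hb u, add_zero]
  zero_mem' := by
    intro u; exact inner_zero_right _
  smul_mem' := by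
    intro c a ha u
    rw [inner_smul_right, ha u, mul_zero]

/-- The `j`-th min-max value of an operator `T` over a subspace `D` of its domain:
`inf` over `j`-dimensional subspaces `W ⊆ D` of the supremum of the Rayleigh quotient
`Re ⟪x, T x⟫ / ‖x‖²` on `W`, encoded as the infimum of all `c` such that some
`j`-dimensional `W ⊆ D` satisfies `Re ⟪x, T x⟫ ≤ c ‖x‖²` on `W`. For a semibounded
self-adjoint operator this agrees with `μ_{T,j} = inf {λ | dim ran E_T((−∞,λ)) ≥ j}`. -/
def minmaxVal (T : H →ₗ.[ℂ] H) (D : Submodule ℂ H) (j : ℕ) : ℝ :=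
  sInf {c : ℝ | ∃ W : Submodule ℂ H, W ≤ D ∧ Module.finrank ℂ ↥W = j ∧
    ∀ (x : H) (hx : x ∈ T.domain), x ∈ W → (⟪x, T ⟨x, hx⟩⟫).re ≤ c * ‖x‖ ^ 2}

section General

variable {E : Type*} [NormedAddCommGroup E] [InnerProductSpace ℂ E]

def minmaxSet (T : E →ₗ.[ℂ] E) (D : Submodule ℂ E) (j : ℕ) : Set ℝ :=
  {c : ℝ | ∃ W : Submodule ℂ E, W ≤ D ∧ Module.finrank ℂ ↥W = j ∧
    ∀ (x : E) (hx : x ∈ T.domain), x ∈ W → (⟪x, T ⟨x, hx⟩⟫).re ≤ c * ‖x‖ ^ 2}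

theorem minmaxVal_eq_sInf_minmaxSet (T : E →ₗ.[ℂ] E) (D : Submodule ℂ E) (j : ℕ) :
    minmaxVal T D j = sInf (minmaxSet T D j) :=
  rfl

theorem not_finiteDimensional_of_dense (hE : ¬ FiniteDimensional ℂ E) {D : Submodule ℂ E}
    (hD : Dense (D : Set E)) : ¬ FiniteDimensional ℂ D := by
  intro hfin
  have htop : D = ⊤ := by
    rw [← D.closed_of_finiteDimensional.submodule_topologicalClosure_eq]
    exact Submodule.dense_iff_topologicalClosure_eq_top.mp hD
  subst htop
  exact hE Submodule.topEquiv.finiteDimensional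

theorem exists_finiteDimensional_le_finrank_eq {D : Submodule ℂ E}
    (hD : ¬ FiniteDimensional ℂ D) (j : ℕ) :
    ∃ W : Submodule ℂ E, W ≤ D ∧ FiniteDimensional ℂ W ∧ Module.finrank ℂ W = j := by
  have hj : (j : Cardinal) ≤ Module.rank ℂ D :=
    Cardinal.natCast_lt_aleph0.le.trans (not_lt.mp (mt Module.rank_lt_aleph0_iff.mp hD))
  obtain ⟨f, hf⟩ := exists_linearIndependent_of_le_rank hj
  have hf' : LinearIndependent ℂ (D.subtype ∘ f) := hf.map' D.subtype D.ker_subtype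
  refine ⟨Submodule.span ℂ (Set.range (D.subtype ∘ f)), ?_,
    FiniteDimensional.span_of_finite ℂ (Set.finite_range _), ?_⟩
  · rw [Submodule.span_le]
    rintro _ ⟨i, rfl⟩
    exact (f i).2
  · rw [finrank_span_eq_card hf', Fintype.card_fin]

theorem exists_re_inner_le_of_finiteDimensional (T : E →ₗ.[ℂ] E) {W : Submodule ℂ E}
    [FiniteDimensional ℂ W] (hW : W ≤ T.domain) :
    ∃ c : ℝ, ∀ (x : E) (hx : x ∈ T.domain), x ∈ W → (⟪x, T ⟨x, hx⟩⟫).re ≤ c * ‖x‖ ^ 2 := by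
  let L : W →L[ℂ] E := LinearMap.toContinuousLinearMap (T.toFun ∘ₗ Submodule.inclusion hW)
  refine ⟨‖L‖, fun x hx hxW => ?_⟩
  calc (⟪x, T ⟨x, hx⟩⟫).re ≤ ‖x‖ * ‖L ⟨x, hxW⟩‖ := re_inner_le_norm (𝕜 := ℂ) x _
    _ ≤ ‖x‖ * (‖L‖ * ‖x‖) := by gcongr; exact L.le_opNorm ⟨x, hxW⟩
    _ = ‖L‖ * ‖x‖ ^ 2 := by ring

theorem minmaxSet_nonempty {T : E →ₗ.[ℂ] E} {D : Submodule ℂ E} (hD : D ≤ T.domain)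
    (hinf : ¬ FiniteDimensional ℂ D) (j : ℕ) : (minmaxSet T D j).Nonempty := by
  obtain ⟨W, hWD, _, hWj⟩ := exists_finiteDimensional_le_finrank_eq hinf j
  obtain ⟨c, hc⟩ := exists_re_inner_le_of_finiteDimensional T (hWD.trans hD)
  exact ⟨c, W, hWD, hWj, hc⟩

theorem le_of_mem_minmaxSet {T : E →ₗ.[ℂ] E} {D : Submodule ℂ E} (hD : D ≤ T.domain) {ε : ℝ}
    (hT : ∀ x : T.domain, ε * ‖(x : E)‖ ^ 2 ≤ (⟪(x : E), T x⟫).re) {j : ℕ} (hj : 1 ≤ j)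
    {c : ℝ} (hc : c ∈ minmaxSet T D j) : ε ≤ c := by
  obtain ⟨W, hWD, hWj, hWc⟩ := hc
  have hW : W ≠ ⊥ := by
    rintro rfl
    rw [finrank_bot] at hWj
    omega
  obtain ⟨x, hxW, hx0⟩ := W.exists_mem_ne_zero_of_ne_bot hW
  have hx := hD (hWD hxW)
  exact le_of_mul_le_mul_right ((hT ⟨x, hx⟩).trans (hWc x hx hxW)) (by positivity)

theorem minmaxSet_mono {T T' : E →ₗ.[ℂ] E} (hT : T ≤ T') (j : ℕ) :
    minmaxSet T T.domain j ⊆ minmaxSet T' T'.domain j := by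
  rintro c ⟨W, hWD, hWj, hWc⟩
  refine ⟨W, hWD.trans hT.1, hWj, fun x hx hxW => ?_⟩
  rw [← hT.2 (x := ⟨x, hWD hxW⟩) rfl]
  exact hWc x _ hxW

theorem minmaxSet_subset_of_linearEquiv {T₁ T₂ : E →ₗ.[ℂ] E} {D : Submodule ℂ E}
    (hD : D ≤ T₂.domain) (e : T₁.domain ≃ₗ[ℂ] D)
    (hnonneg : ∀ u : T₁.domain, 0 ≤ (⟪(u : E), T₁ u⟫).re)
    (hnorm : ∀ u, ‖(e u : E)‖ ≤ ‖(u : E)‖)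
    (hform : ∀ u, ⟪(e u : E), T₂ ⟨e u, hD (e u).2⟩⟫ = ⟪(u : E), T₁ u⟫) (j : ℕ) :
    minmaxSet T₂ D j ⊆ minmaxSet T₁ T₁.domain j := by
  rintro c ⟨W, hWD, hWj, hWc⟩
  let P : W →ₗ[ℂ] E := T₁.domain.subtype ∘ₗ e.symm.toLinearMap ∘ₗ Submodule.inclusion hWD
  have hP : Function.Injective P := T₁.domain.injective_subtype.comp
    (e.symm.injective.comp (Submodule.inclusion_injective hWD))
  refine ⟨LinearMap.range P, ?_, (LinearMap.finrank_range_of_inj hP).trans hWj, ?_⟩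
  · rintro _ ⟨w, rfl⟩
    exact (e.symm _).2
  rintro _ - ⟨w, rfl⟩
  set u := e.symm (Submodule.inclusion hWD w)
  have hq : (⟪(u : E), T₁ u⟫).re ≤ c * ‖(e u : E)‖ ^ 2 := by
    rw [← hform]
    exact hWc _ _ (by simp [u])
  show (⟪(u : E), T₁ u⟫).re ≤ c * ‖(u : E)‖ ^ 2
  rcases le_or_gt 0 c with hc | hc
  · exact hq.trans (by gcongr; exact hnorm u)
  -- a negative bound forces `e u = 0`
  · have he : ‖(e u : E)‖ ^ 2 = 0 := by nlinarith [hnonneg u, sq_nonneg ‖(e u : E)‖]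
    have hu : u = 0 := by simpa using he
    simp [hu]

theorem adjKerD_eq_orthogonal_range (S : E →ₗ.[ℂ] E) :
    adjKerD S = (LinearMap.range S.toFun)ᗮ := by
  ext v
  rw [Submodule.mem_orthogonal]
  refine ⟨fun h _ hx => ?_, fun h u => h _ (LinearMap.mem_range_self _ u)⟩
  obtain ⟨u, rfl⟩ := LinearMap.mem_range.mp hx
  exact h u

theorem apply_eq_zero_of_mem_adjKerD {S S_K : E →ₗ.[ℂ] E} (hdense : Dense (S.domain : Set E))
    (hKadj : ∀ (v : S_K.domain) (u : S.domain), ⟪S u, (v : E)⟫ = ⟪(u : E), S_K v⟫)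
    {w : S_K.domain} (hw : (w : E) ∈ adjKerD S) : S_K w = 0 :=
  hdense.eq_zero_of_inner_right ℂ fun u hu => (hKadj w ⟨u, hu⟩).symm.trans (hw ⟨u, hu⟩)

end General

section Krein

variable {S S_K : H →ₗ.[ℂ] H}

instance (S : H →ₗ.[ℂ] H) : CompleteSpace (adjKerD S) := by
  rw [adjKerD_eq_orthogonal_range]
  infer_instance

theorem starProjection_mem_reducedDomain (hdomK : S_K.domain = S.domain ⊔ adjKerD S)
    (u : S.domain) :
    (adjKerD S)ᗮ.starProjection u ∈ S_K.domain ⊓ (adjKerD S)ᗮ := by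
  refine ⟨?_, Submodule.starProjection_apply_mem _ _⟩
  rw [Submodule.starProjection_orthogonal_val, hdomK, sub_eq_add_neg]
  exact Submodule.add_mem_sup u.2 (neg_mem (Submodule.starProjection_apply_mem _ _))

theorem apply_starProjection_orthogonal_adjKerD (hdense : Dense (S.domain : Set H))
    (hKext : S ≤ S_K)
    (hKadj : ∀ (v : S_K.domain) (u : S.domain), ⟪S u, (v : H)⟫ = ⟪(u : H), S_K v⟫)
    (hdomK : S_K.domain = S.domain ⊔ adjKerD S) (u : S.domain)
    (hu : (adjKerD S)ᗮ.starProjection u ∈ S_K.domain) :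
    S_K ⟨_, hu⟩ = S u := by
  set w := (adjKerD S).starProjection u
  have hwK : w ∈ adjKerD S := Submodule.starProjection_apply_mem _ _
  have hw : w ∈ S_K.domain := hdomK ▸ Submodule.mem_sup_right hwK
  have hsplit : (⟨_, hu⟩ : S_K.domain) = ⟨u, hKext.1 u.2⟩ - ⟨w, hw⟩ :=
    Subtype.ext (Submodule.starProjection_orthogonal_val _)
  rw [hsplit, S_K.map_sub, apply_eq_zero_of_mem_adjKerD hdense hKadj (w := ⟨w, hw⟩) hwK, sub_zero]
  exact (hKext.2 rfl).symm

theorem inner_apply_starProjection_orthogonal_adjKerD (hdense : Dense (S.domain : Set H))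
    (hKext : S ≤ S_K)
    (hKadj : ∀ (v : S_K.domain) (u : S.domain), ⟪S u, (v : H)⟫ = ⟪(u : H), S_K v⟫)
    (hdomK : S_K.domain = S.domain ⊔ adjKerD S) (u : S.domain)
    (hu : (adjKerD S)ᗮ.starProjection u ∈ S_K.domain) :
    ⟪(adjKerD S)ᗮ.starProjection u, S_K ⟨_, hu⟩⟫ = ⟪(u : H), S u⟫ := by
  have hw : ⟪(adjKerD S).starProjection u, S u⟫ = 0 := by
    rw [← inner_conj_symm, Submodule.starProjection_apply_mem (adjKerD S) u u, map_zero]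
  rw [apply_starProjection_orthogonal_adjKerD hdense hKext hKadj hdomK,
    Submodule.starProjection_orthogonal_val, inner_sub_left, hw, sub_zero]

theorem exists_linearEquiv_reducedDomain {ε : ℝ} (hε : 0 < ε)
    (hbound : ∀ u : S.domain, ε * ‖(u : H)‖ ^ 2 ≤ (⟪(u : H), S u⟫).re)
    (hdense : Dense (S.domain : Set H)) (hKext : S ≤ S_K)
    (hKadj : ∀ (v : S_K.domain) (u : S.domain), ⟪S u, (v : H)⟫ = ⟪(u : H), S_K v⟫)
    (hdomK : S_K.domain = S.domain ⊔ adjKerD S) :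
    ∃ e : S.domain ≃ₗ[ℂ] ↥(S_K.domain ⊓ (adjKerD S)ᗮ),
      (∀ u, ‖(e u : H)‖ ≤ ‖(u : H)‖) ∧
        ∀ u, ⟪(e u : H), S_K ⟨e u, (e u).2.1⟩⟫ = ⟪(u : H), S u⟫ := by
  let P : S.domain →ₗ[ℂ] ↥(S_K.domain ⊓ (adjKerD S)ᗮ) :=
    ((adjKerD S)ᗮ.starProjection.toLinearMap ∘ₗ S.domain.subtype).codRestrict _
      (starProjection_mem_reducedDomain hdomK)
  have hform (u : S.domain) : ⟪(P u : H), S_K ⟨P u, (P u).2.1⟩⟫ = ⟪(u : H), S u⟫ :=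
    inner_apply_starProjection_orthogonal_adjKerD hdense hKext hKadj hdomK u _
  have hinj : Function.Injective P := by
    refine (injective_iff_map_eq_zero P).mpr fun u hu => ?_
    have hzero : ⟪(u : H), S u⟫ = 0 := by simpa [hu] using (hform u).symm
    have hu2 : ε * ‖(u : H)‖ ^ 2 ≤ 0 := by simpa [hzero] using hbound u
    simpa using nonpos_of_mul_nonpos_right hu2 hε
  have hsurj : Function.Surjective P := by
    rintro ⟨v, hvK, hvO⟩
    rw [hdomK] at hvK
    obtain ⟨u, hu, w, hw, rfl⟩ := Submodule.mem_sup.mp hvK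
    refine ⟨⟨u, hu⟩, Subtype.ext ?_⟩
    calc (adjKerD S)ᗮ.starProjection u
        = (adjKerD S)ᗮ.starProjection (u + w) - (adjKerD S)ᗮ.starProjection w := by
          rw [map_add, add_sub_cancel_right]
      _ = u + w := by
          rw [Submodule.starProjection_eq_self_iff.mpr hvO,
            Submodule.starProjection_orthogonal_apply_eq_zero hw, sub_zero]
  exact ⟨.ofBijective P ⟨hinj, hsurj⟩, fun u => Submodule.norm_starProjection_apply_le _ _, hform⟩

end Krein

theorem stmt_9_general (S S_F S_K : H →ₗ.[ℂ] H)
    (hinf : ¬ FiniteDimensional ℂ H)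
    (hdense : Dense (S.domain : Set H))
    (ε : ℝ) (hε : 0 < ε)
    (hbound : ∀ u : S.domain, ε * ‖(u : H)‖ ^ 2 ≤ (⟪(u : H), S u⟫).re)
    (hFext : S ≤ S_F)
    (hFbound : ∀ v : S_F.domain, ε * ‖(v : H)‖ ^ 2 ≤ (⟪(v : H), S_F v⟫).re)
    (hKext : S ≤ S_K)
    (hKadj : ∀ (v : S_K.domain) (u : S.domain), ⟪S u, (v : H)⟫ = ⟪(u : H), S_K v⟫)
    (hdomK : S_K.domain = S.domain ⊔ adjKerD S) :
    (∀ j : ℕ, 1 ≤ j →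
      ε ≤ minmaxVal S_F S_F.domain j ∧
        minmaxVal S_F S_F.domain j ≤ minmaxVal S_K (S_K.domain ⊓ (adjKerD S)ᗮ) j) ∧
    (Filter.Tendsto (fun j => minmaxVal S_F S_F.domain j) Filter.atTop Filter.atTop →
      Filter.Tendsto (fun j => minmaxVal S_K (S_K.domain ⊓ (adjKerD S)ᗮ) j)
        Filter.atTop Filter.atTop) := by
  obtain ⟨e, hnorm, hform⟩ :=
    exists_linearEquiv_reducedDomain hε hbound hdense hKext hKadj hdomK
  have hnonneg (u : S.domain) : 0 ≤ (⟪(u : H), S u⟫).re := le_trans (by positivity) (hbound u)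
  have hsub (j : ℕ) :
      minmaxSet S_K (S_K.domain ⊓ (adjKerD S)ᗮ) j ⊆ minmaxSet S_F S_F.domain j :=
    (minmaxSet_subset_of_linearEquiv inf_le_left e hnonneg hnorm hform j).trans
      (minmaxSet_mono hFext j)
  have hne (j : ℕ) : (minmaxSet S_K (S_K.domain ⊓ (adjKerD S)ᗮ) j).Nonempty :=
    minmaxSet_nonempty inf_le_left
      (fun _ => not_finiteDimensional_of_dense hinf hdense e.symm.finiteDimensional) j
  have hlb {j : ℕ} (hj : 1 ≤ j) : ∀ c ∈ minmaxSet S_F S_F.domain j, ε ≤ c :=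
    fun _ => le_of_mem_minmaxSet le_rfl hFbound hj
  have hmain (j : ℕ) (hj : 1 ≤ j) :
      ε ≤ minmaxVal S_F S_F.domain j ∧
        minmaxVal S_F S_F.domain j ≤ minmaxVal S_K (S_K.domain ⊓ (adjKerD S)ᗮ) j := by
    rw [minmaxVal_eq_sInf_minmaxSet, minmaxVal_eq_sInf_minmaxSet]
    exact ⟨le_csInf ((hne j).mono (hsub j)) (hlb hj),
      csInf_le_csInf ⟨ε, hlb hj⟩ (hne j) (hsub j)⟩
  refine ⟨hmain, tendsto_atTop_mono' atTop ?_⟩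
  filter_upwards [eventually_ge_atTop 1] with j hj using (hmain j hj).2

/-- Theorem 2.10: Let `S` be densely defined, closed, symmetric with
`S ≥ ε·I`, `ε > 0`, in an infinite-dimensional Hilbert space, and let `S_F`, `S_K` be the
Friedrichs and Krein–von Neumann extensions. With `μ_{F,j}` and `μ_{K,j}` the `j`-th
min-max values of `S_F` and of the reduced Krein operator
`Ŝ_K = S_K|_{(ker S_K)ᗮ}` (domain `dom S_K ∩ (ker S*)ᗮ`), one has
`ε ≤ μ_{F,j} ≤ μ_{K,j}` for all `j ≥ 1`. In particular, if `S_F` has purely discrete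
spectrum (`μ_{F,j} → ∞`), then `S_K` has purely discrete spectrum in `(0, ∞)`
(`μ_{K,j} → ∞`). -/
theorem stmt_9 (S S_F S_K : H →ₗ.[ℂ] H)
    (hinf : ¬ FiniteDimensional ℂ H)
    (hdense : Dense (S.domain : Set H))
    (hclosed : S.IsClosed)
    (hsym : ∀ u v : S.domain, ⟪S u, (v : H)⟫ = ⟪(u : H), S v⟫)
    (ε : ℝ) (hε : 0 < ε)
    (hbound : ∀ u : S.domain, ε * ‖(u : H)‖ ^ 2 ≤ (⟪(u : H), S u⟫).re)
    (hFext : S ≤ S_F)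
    (hFadj : ∀ (v : S_F.domain) (u : S.domain), ⟪S u, (v : H)⟫ = ⟪(u : H), S_F v⟫)
    (hFbound : ∀ v : S_F.domain, ε * ‖(v : H)‖ ^ 2 ≤ (⟪(v : H), S_F v⟫).re)
    (hKext : S ≤ S_K)
    (hKadj : ∀ (v : S_K.domain) (u : S.domain), ⟪S u, (v : H)⟫ = ⟪(u : H), S_K v⟫)
    (hKnn : ∀ v : S_K.domain, 0 ≤ (⟪(v : H), S_K v⟫).re)
    (hdomK : S_K.domain = S.domain ⊔ adjKerD S) :
    (∀ j : ℕ, 1 ≤ j →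
      ε ≤ minmaxVal S_F S_F.domain j ∧
        minmaxVal S_F S_F.domain j ≤ minmaxVal S_K (S_K.domain ⊓ (adjKerD S)ᗮ) j) ∧
    (Filter.Tendsto (fun j => minmaxVal S_F S_F.domain j) Filter.atTop Filter.atTop →
      Filter.Tendsto (fun j => minmaxVal S_K (S_K.domain ⊓ (adjKerD S)ᗮ) j)
        Filter.atTop Filter.atTop) :=
  stmt_9_general S S_F S_K hinf hdense ε hε hbound hFext hFbound hKext hKadj hdomK

end
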